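/- Let μ and μ_n (n ≥ 1) be Borel probability measures on (0,∞) with ∫ |log x| dμ(x) < ∞ and ∫ |log x| dμ_n(x) < ∞ for all n, such that μ_n → μ weakly and ∫ |log x| dμ_n(x) → ∫ |log x| dμ(x). Then for every sequence (c_n) in (0,1] with c_n → 1, one has [μ_n]_{c_n} → [μ]_1 = exp ∫ log x dμ(x). -/

import Mathlib

/-!
For `0 < c ≤ 1`, concavity of `log` (Bernoulli's inequality `t ^ c ≤ c t + 1 - c`) gives
`K(x,y,c) ≥ log x`, while `K(x,1,c) = c⁻¹ log (c x + 1 - c)`. Hence `log [ν]_c` lies between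
`∫ log x dν` and `∫ c⁻¹ log (c x + 1 - c) dν`, and both bounds equal `∫ log x dν` at `c = 1`.

Weak convergence together with `∫ |log x| dμₙ → ∫ |log x| dμ` makes the tails
`∫ (|log x| - min |log x| M) dμₙ` uniformly small for large `M`. Truncating `log` at `±M` then gives
`∫ log dμₙ → ∫ log dμ`, and the gap between the two bounds is at most
`(cₙ⁻¹ - 1) ∫ |log x| dμₙ + cₙ⁻¹ (1 - cₙ) e^{2M}` plus twice such a tail, which tends to `0`.
-/

open MeasureTheory Filter Topology
open scoped ENNReal

noncomputable def elogr (t : ℝ) : EReal := if t ≤ 0 then ⊥ else ((Real.log t : ℝ) : EReal)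

/-- The Halász–Székely kernel, with values in `[-∞, +∞)` (`EReal`). -/
noncomputable def hsKernel (c x y : ℝ) : EReal :=
  if c = 0 then ((Real.log y + y⁻¹ * x - 1 : ℝ) : EReal)
  else ((Real.log y : ℝ) : EReal) + ((c⁻¹ : ℝ) : EReal) * elogr (c * y⁻¹ * x + 1 - c)

/-- The nonnegative part of an extended real, as an element of `[0,∞]`. -/
noncomputable def erealToENNReal (x : EReal) : ℝ≥0∞ :=
  if x = ⊤ then ⊤ else ENNReal.ofReal x.toReal

/-- Integral of an `EReal`-valued function: positive part minus negative part. -/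
noncomputable def eIntegral (μ : Measure ℝ) (f : ℝ → EReal) : EReal :=
  ((∫⁻ x, erealToENNReal (f x) ∂μ : ℝ≥0∞) : EReal) - ((∫⁻ x, erealToENNReal (-f x) ∂μ : ℝ≥0∞) : EReal)

/-- Exponential on `EReal`, with values in `[0,∞]`. -/
noncomputable def eexp (x : EReal) : ℝ≥0∞ :=
  if x = ⊤ then ⊤ else if x = ⊥ then 0 else ENNReal.ofReal (Real.exp x.toReal)

/-- The Halász–Székely barycenter `[μ]_c ∈ [0,∞]`. -/
noncomputable def hsBary (c : ℝ) (μ : Measure ℝ) : ℝ≥0∞ :=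
  eexp (⨅ y : {y : ℝ // 0 < y}, eIntegral μ (fun x => hsKernel c x y))

/-- The function `B`. -/
noncomputable def hsB (c : ℝ) : ℝ :=
  if c = 0 then 0 else if c = 1 then 1 else c * (1 - c) ^ ((1 - c) / c)

/-- The uniform probability measure on the entries of a tuple. -/
noncomputable def unifMeasure {n : ℕ} (x : Fin n → ℝ) : Measure ℝ :=
  (n : ℝ≥0∞)⁻¹ • ∑ i, MeasureTheory.Measure.dirac (x i)

/-- The Halász–Székely mean of a tuple. -/
noncomputable def hsMean (c : ℝ) {n : ℕ} (x : Fin n → ℝ) : ℝ≥0∞ := hsBary c (unifMeasure x)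

/-- The `k`-th symmetric mean of an `n`-tuple. -/
noncomputable def symMean {n : ℕ} (k : ℕ) (x : Fin n → ℝ) : ℝ :=
  ((∑ s ∈ Finset.univ.powersetCard k, ∏ i ∈ s, x i) / (n.choose k)) ^ ((k : ℝ)⁻¹)

open Set

lemma monotone_erealToENNReal : Monotone erealToENNReal := by
  intro x y h
  unfold erealToENNReal
  by_cases hy : y = ⊤
  · simp [hy]
  have hx : x ≠ ⊤ := ne_top_of_le_ne_top hy h
  by_cases hxb : x = ⊥
  · simp [hy, hxb]
  simp only [hx, hy, if_false]
  exact ENNReal.ofReal_le_ofReal (EReal.toReal_le_toReal h hxb hy)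

section EIntegral

variable {ν : Measure ℝ}

lemma eIntegral_mono_ae {f g : ℝ → EReal} (h : f ≤ᵐ[ν] g) : eIntegral ν f ≤ eIntegral ν g := by
  refine EReal.sub_le_sub ?_ ?_ <;> refine EReal.coe_ennreal_le_coe_ennreal_iff.mpr
    (lintegral_mono_ae (h.mono fun x hx => monotone_erealToENNReal ?_))
  exacts [hx, EReal.neg_le_neg_iff.mpr hx]

lemma eIntegral_congr_ae {f g : ℝ → EReal} (h : f =ᵐ[ν] g) : eIntegral ν f = eIntegral ν g :=
  le_antisymm (eIntegral_mono_ae h.le) (eIntegral_mono_ae h.symm.le)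

lemma eIntegral_coe {g : ℝ → ℝ} (hg : Integrable g ν) :
    eIntegral ν (fun x => (g x : EReal)) = ((∫ x, g x ∂ν : ℝ) : EReal) := by
  have hneg : ∀ x, -(g x : EReal) = ((-g x : ℝ) : EReal) := fun x => (EReal.coe_neg _).symm
  have hpos := hg.lintegral_lt_top
  have hneg' := hg.neg.lintegral_lt_top
  simp only [Pi.neg_apply] at hneg'
  simp only [eIntegral, hneg, erealToENNReal, EReal.coe_ne_top, if_false, EReal.toReal_coe,
    integral_eq_lintegral_pos_part_sub_lintegral_neg_part hg, EReal.coe_sub,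
    EReal.coe_ennreal_toReal hpos.ne, EReal.coe_ennreal_toReal hneg'.ne]

end EIntegral

lemma exists_eexp_eq_ofReal_exp {I : EReal} {a b : ℝ} (ha : (a : EReal) ≤ I) (hb : I ≤ b) :
    ∃ t, a ≤ t ∧ t ≤ b ∧ eexp I = ENNReal.ofReal (Real.exp t) := by
  induction I using EReal.rec with
  | bot => exact absurd ha (by simp)
  | top => exact absurd hb (by simp)
  | coe t => exact ⟨t, EReal.coe_le_coe_iff.mp ha, EReal.coe_le_coe_iff.mp hb, by simp [eexp]⟩

noncomputable def hsKernelAtOne (c x : ℝ) : ℝ := c⁻¹ * Real.log (c * x + 1 - c)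

lemma hsKernelAtOne_one : hsKernelAtOne 1 = Real.log := by
  funext x; simp [hsKernelAtOne]

lemma hsKernel_eq_coe {c x y : ℝ} (hc : 0 < c) (hc1 : c ≤ 1) (hx : 0 < x) (hy : 0 < y) :
    hsKernel c x y = ((Real.log y + hsKernelAtOne c (y⁻¹ * x) : ℝ) : EReal) := by
  have harg : 0 < c * y⁻¹ * x + 1 - c := by nlinarith [mul_pos (mul_pos hc (inv_pos.mpr hy)) hx]
  rw [hsKernel, if_neg hc.ne', elogr, if_neg (not_le.mpr harg), hsKernelAtOne, mul_assoc]
  norm_cast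

lemma log_le_hsKernelAtOne {c x : ℝ} (hc : 0 < c) (hc1 : c ≤ 1) (hx : 0 < x) :
    Real.log x ≤ hsKernelAtOne c x := by
  have bernoulli := rpow_one_add_le_one_add_mul_self (s := x - 1) (by linarith) hc.le hc1
  rw [add_sub_cancel] at bernoulli
  have hlog : c * Real.log x ≤ Real.log (c * x + 1 - c) := by
    rw [← Real.log_rpow hx]
    exact Real.log_le_log (by positivity) (by linarith)
  rwa [hsKernelAtOne, le_inv_mul_iff₀ hc]

lemma log_le_hsKernel {c x y : ℝ} (hc : 0 < c) (hc1 : c ≤ 1) (hx : 0 < x) (hy : 0 < y) :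
    (Real.log x : EReal) ≤ hsKernel c x y := by
  have hxy : 0 < y⁻¹ * x := by positivity
  have := log_le_hsKernelAtOne hc hc1 hxy
  rw [Real.log_mul (inv_ne_zero hy.ne') hx.ne', Real.log_inv] at this
  rw [hsKernel_eq_coe hc hc1 hx hy, EReal.coe_le_coe_iff]
  linarith

lemma ae_pos_of_measure_Iic_zero {ν : Measure ℝ} (h : ν (Iic 0) = 0) : ∀ᵐ x ∂ν, 0 < x :=
  (measure_eq_zero_iff_ae_notMem.mp h).mono fun _ hx => not_le.mp hx

lemma integrable_log_of_integrable_abs_log {ν : Measure ℝ}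
    (h : Integrable (fun x => |Real.log x|) ν) : Integrable Real.log ν :=
  h.mono' Real.measurable_log.aestronglyMeasurable (ae_of_all _ fun _ => le_rfl)

noncomputable def logTail (M x : ℝ) : ℝ := |Real.log x| - min |Real.log x| M

lemma logTail_nonneg (M x : ℝ) : 0 ≤ logTail M x := sub_nonneg.mpr (min_le_left _ _)

lemma abs_sub_clamp_le (t M : ℝ) : |t - max (min t M) (-M)| ≤ |t| - min |t| M := by
  rcases lt_or_ge M 0 with hM | hM
  · rw [max_eq_right (by linarith [min_le_right t M]), min_eq_right (hM.le.trans (abs_nonneg t)),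
      sub_neg_eq_add]
    linarith [abs_add_le t M, abs_of_neg hM]
  rcases le_total t M with htM | hMt
  · rcases le_total (-M) t with hMt' | htM'
    · simp [min_eq_left htM, max_eq_left hMt']
    · rw [min_eq_left htM, max_eq_right htM', abs_of_nonpos (by linarith : t - -M ≤ 0),
        abs_of_nonpos (by linarith : t ≤ 0), min_eq_right (by linarith : M ≤ -t)]
      linarith
  · rw [min_eq_right hMt, max_eq_left (by linarith : -M ≤ M),
      abs_of_nonneg (by linarith : 0 ≤ t - M), abs_of_nonneg (by linarith : 0 ≤ t),
      min_eq_right hMt]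

lemma log_add_le_log_add_div {x a : ℝ} (hx : 0 < x) (ha : 0 ≤ a) :
    Real.log (x + a) ≤ Real.log x + a / x := by
  have hxa : 0 < x + a := by linarith
  have h := Real.log_le_sub_one_of_pos (div_pos hxa hx)
  rw [Real.log_div hxa.ne' hx.ne', add_div, div_self hx.ne'] at h
  linarith

lemma hsKernelAtOne_sub_log_le {c x M : ℝ} (hc : 0 < c) (hc1 : c ≤ 1) (hx : 0 < x) :
    hsKernelAtOne c x - Real.log x ≤
      (c⁻¹ - 1) * |Real.log x| + c⁻¹ * (1 - c) * Real.exp (2 * M) + 2 * logTail M x := by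
  have hci : 1 ≤ c⁻¹ := one_le_inv_iff₀.mpr ⟨hc, hc1⟩
  have harg : 0 < c * x + 1 - c := by nlinarith
  have hconst : 0 ≤ c⁻¹ * (1 - c) * Real.exp (2 * M) :=
    mul_nonneg (mul_nonneg (by linarith) (by linarith)) (Real.exp_pos _).le
  have htail := logTail_nonneg M x
  unfold hsKernelAtOne
  rcases le_or_gt 1 x with hx1 | hx1
  · have hlog := Real.log_nonneg hx1
    have hk : Real.log (c * x + 1 - c) ≤ Real.log x := Real.log_le_log harg (by nlinarith)
    rw [abs_of_nonneg hlog]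
    nlinarith [mul_le_mul_of_nonneg_left hk (by linarith : 0 ≤ c⁻¹)]
  have hlog := Real.log_neg hx hx1
  rw [abs_of_neg hlog]
  rcases le_or_gt (Real.exp (-(2 * M))) x with hδx | hxδ
  · -- `x ≥ e^{-2M}` bounds the derivative `1/x` of `log` on `[x, x + 1 - c]`
    have hdiv : (1 - c) / x ≤ (1 - c) * Real.exp (2 * M) := by
      rw [div_le_iff₀ hx, mul_assoc]
      refine le_mul_of_one_le_right (by linarith) ?_
      calc (1 : ℝ) = Real.exp (2 * M) * Real.exp (-(2 * M)) := by rw [← Real.exp_add]; simp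
        _ ≤ Real.exp (2 * M) * x := by gcongr
    have hk : Real.log (c * x + 1 - c) ≤ Real.log x + (1 - c) * Real.exp (2 * M) :=
      calc Real.log (c * x + 1 - c) ≤ Real.log (x + (1 - c)) := Real.log_le_log harg (by nlinarith)
        _ ≤ Real.log x + (1 - c) / x := log_add_le_log_add_div hx (by linarith)
        _ ≤ _ := by linarith
    nlinarith [mul_le_mul_of_nonneg_left hk (by linarith : 0 ≤ c⁻¹)]
  · have hk : Real.log (c * x + 1 - c) ≤ 0 := Real.log_nonpos harg.le (by nlinarith)
    have hlt : 2 * M < -Real.log x := by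
      have := Real.log_lt_log hx hxδ
      rw [Real.log_exp] at this
      linarith
    have : logTail M x = -Real.log x - M := by
      rw [logTail, abs_of_neg hlog, min_eq_right (by linarith)]
    nlinarith [mul_nonpos_of_nonneg_of_nonpos (by linarith : 0 ≤ c⁻¹) hk]

section Integrals

variable {ν : Measure ℝ}

lemma integrable_min_abs_log (h : Integrable (fun x => |Real.log x|) ν) {M : ℝ} (hM : 0 ≤ M) :
    Integrable (fun x => min |Real.log x| M) ν :=
  h.mono' (Real.measurable_log.abs.min measurable_const).aestronglyMeasurable
    (ae_of_all _ fun x => by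
      rw [Real.norm_eq_abs, abs_of_nonneg (le_min (abs_nonneg _) hM)]
      exact min_le_left _ _)

lemma integrable_logTail (h : Integrable (fun x => |Real.log x|) ν) {M : ℝ} (hM : 0 ≤ M) :
    Integrable (logTail M) ν :=
  h.sub (integrable_min_abs_log h hM)

lemma integral_logTail (h : Integrable (fun x => |Real.log x|) ν) {M : ℝ} (hM : 0 ≤ M) :
    ∫ x, logTail M x ∂ν = ∫ x, |Real.log x| ∂ν - ∫ x, min |Real.log x| M ∂ν :=
  integral_sub h (integrable_min_abs_log h hM)

lemma tendsto_integral_logTail_atTop (h : Integrable (fun x => |Real.log x|) ν) :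
    Tendsto (fun M => ∫ x, logTail M x ∂ν) atTop (𝓝 0) := by
  have hlim : ∀ x, Tendsto (fun M => logTail M x) atTop (𝓝 0) := fun x =>
    tendsto_const_nhds.congr' ((eventually_ge_atTop |Real.log x|).mono fun M hM => by
      simp [logTail, min_eq_left hM])
  simpa using tendsto_integral_filter_of_dominated_convergence (F := fun M x => logTail M x)
    (fun x => |Real.log x|)
    (Eventually.of_forall fun M => (Real.measurable_log.abs.sub
      (Real.measurable_log.abs.min measurable_const)).aestronglyMeasurable)
    ((eventually_ge_atTop 0).mono fun M hM => ae_of_all _ fun x => by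
      rw [Real.norm_eq_abs, abs_of_nonneg (logTail_nonneg M x), logTail]
      linarith [le_min (abs_nonneg (Real.log x)) hM])
    h (ae_of_all _ hlim)

lemma abs_integral_log_sub_integral_clamp_le (h : Integrable (fun x => |Real.log x|) ν) {M : ℝ}
    (hM : 0 ≤ M) :
    |∫ x, Real.log x ∂ν - ∫ x, max (min (Real.log x) M) (-M) ∂ν| ≤ ∫ x, logTail M x ∂ν := by
  have hclamp : Integrable (fun x => max (min (Real.log x) M) (-M)) ν :=
    h.mono' ((Real.measurable_log.min measurable_const).max measurable_const).aestronglyMeasurable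
      (ae_of_all _ fun x => by
        rw [Real.norm_eq_abs]
        have := abs_nonneg (Real.log x)
        exact abs_le.mpr ⟨(le_min (neg_abs_le _) (by linarith)).trans (le_max_left _ _),
          max_le ((min_le_left _ _).trans (le_abs_self _)) (by linarith)⟩)
  rw [← integral_sub (integrable_log_of_integrable_abs_log h) hclamp]
  exact (abs_integral_le_integral_abs).trans
    (integral_mono (((integrable_log_of_integrable_abs_log h).sub hclamp).abs)
      (integrable_logTail h hM) fun x => abs_sub_clamp_le _ _)

lemma integrable_hsKernelAtOne [IsFiniteMeasure ν] (hν : ν (Iic 0) = 0)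
    (h : Integrable (fun x => |Real.log x|) ν) {c : ℝ} (hc : 0 < c) (hc1 : c ≤ 1) :
    Integrable (hsKernelAtOne c) ν := by
  have hlog := integrable_log_of_integrable_abs_log h
  refine integrable_of_le_of_le (g₁ := Real.log) (g₂ := fun x => Real.log x +
      ((c⁻¹ - 1) * |Real.log x| + c⁻¹ * (1 - c) * Real.exp (2 * 0) + 2 * logTail 0 x))
    ((Measurable.log (by fun_prop)).const_mul _).aestronglyMeasurable ?_ ?_ hlog ?_
  · filter_upwards [ae_pos_of_measure_Iic_zero hν] with x hx
    exact log_le_hsKernelAtOne hc hc1 hx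
  · filter_upwards [ae_pos_of_measure_Iic_zero hν] with x hx
    linarith [hsKernelAtOne_sub_log_le (M := 0) hc hc1 hx]
  · exact hlog.add (((h.const_mul _).add (integrable_const _)).add
      ((integrable_logTail h le_rfl).const_mul 2))

lemma integral_hsKernelAtOne_sub_log_le [IsProbabilityMeasure ν] (hν : ν (Iic 0) = 0)
    (h : Integrable (fun x => |Real.log x|) ν) {c M : ℝ} (hc : 0 < c) (hc1 : c ≤ 1)
    (hM : 0 ≤ M) :
    ∫ x, hsKernelAtOne c x ∂ν - ∫ x, Real.log x ∂ν ≤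
      (c⁻¹ - 1) * ∫ x, |Real.log x| ∂ν + c⁻¹ * (1 - c) * Real.exp (2 * M)
        + 2 * ∫ x, logTail M x ∂ν := by
  have hlin : Integrable (fun x => (c⁻¹ - 1) * |Real.log x| + c⁻¹ * (1 - c) * Real.exp (2 * M)) ν :=
    (h.const_mul _).add (integrable_const _)
  have htail := (integrable_logTail h hM).const_mul 2
  rw [← integral_sub (integrable_hsKernelAtOne hν h hc hc1) (integrable_log_of_integrable_abs_log h)]
  calc ∫ x, (hsKernelAtOne c x - Real.log x) ∂ν
      ≤ ∫ x, ((c⁻¹ - 1) * |Real.log x| + c⁻¹ * (1 - c) * Real.exp (2 * M) + 2 * logTail M x) ∂ν :=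
        integral_mono_ae ((integrable_hsKernelAtOne hν h hc hc1).sub
          (integrable_log_of_integrable_abs_log h)) (hlin.add htail)
          ((ae_pos_of_measure_Iic_zero hν).mono fun x hx => hsKernelAtOne_sub_log_le hc hc1 hx)
    _ = _ := by
        rw [integral_add hlin htail, integral_add (h.const_mul _) (integrable_const _)]
        simp [integral_const_mul]

end Integrals

lemma exists_hsBary_eq_ofReal_exp {ν : Measure ℝ} [IsFiniteMeasure ν] (hν : ν (Iic 0) = 0)
    (h : Integrable (fun x => |Real.log x|) ν) {c : ℝ} (hc : 0 < c) (hc1 : c ≤ 1) :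
    ∃ t, ∫ x, Real.log x ∂ν ≤ t ∧ t ≤ ∫ x, hsKernelAtOne c x ∂ν ∧
      hsBary c ν = ENNReal.ofReal (Real.exp t) := by
  refine exists_eexp_eq_ofReal_exp (le_iInf fun y => ?_) ((iInf_le _ ⟨1, one_pos⟩).trans_eq ?_)
  · rw [← eIntegral_coe (integrable_log_of_integrable_abs_log h)]
    exact eIntegral_mono_ae ((ae_pos_of_measure_Iic_zero hν).mono fun x hx =>
      log_le_hsKernel hc hc1 hx y.2)
  · rw [← eIntegral_coe (integrable_hsKernelAtOne hν h hc hc1)]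
    exact eIntegral_congr_ae ((ae_pos_of_measure_Iic_zero hν).mono fun x hx => by
      simp [hsKernel_eq_coe hc hc1 hx one_pos])

def WeakTendsto (μs : ℕ → Measure ℝ) (μ : Measure ℝ) : Prop :=
  ∀ φ : BoundedContinuousFunction ℝ ℝ, Tendsto (fun n => ∫ x, φ x ∂(μs n)) atTop (𝓝 (∫ x, φ x ∂μ))

namespace WeakTendsto

variable {μs : ℕ → Measure ℝ} {μ : Measure ℝ}

/-- A bounded continuous `φ` that is constant on `(-∞, -M]` makes `φ ∘ log` extend continuously
to `x ≤ 0`. -/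
lemma tendsto_integral_comp_log (h : WeakTendsto μs μ) (hμ : μ (Iic 0) = 0)
    (hμs : ∀ n, μs n (Iic 0) = 0) {φ : ℝ → ℝ} (hφ : Continuous φ) {C M : ℝ}
    (hC : ∀ t, |φ t| ≤ C) (hM : ∀ t ≤ -M, φ t = φ (-M)) :
    Tendsto (fun n => ∫ x, φ (Real.log x) ∂(μs n)) atTop (𝓝 (∫ x, φ (Real.log x) ∂μ)) := by
  let ψ : BoundedContinuousFunction ℝ ℝ := .ofNormedAddCommGroup
    (fun x => φ (Real.log (max x (Real.exp (-M)))))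
    (hφ.comp (Real.continuousOn_log.comp_continuous (continuous_id.max continuous_const)
      fun x => (lt_max_of_lt_right (Real.exp_pos _)).ne'))
    C (fun x => hC _)
  have hψ : ∀ ν : Measure ℝ, ν (Iic 0) = 0 → ∫ x, ψ x ∂ν = ∫ x, φ (Real.log x) ∂ν :=
    fun ν hν => integral_congr_ae ((ae_pos_of_measure_Iic_zero hν).mono fun x hx => by
      rcases le_total (Real.exp (-M)) x with hMx | hxM
      · simp [ψ, max_eq_left hMx]
      · simp only [ψ, BoundedContinuousFunction.coe_ofNormedAddCommGroup, max_eq_right hxM,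
          Real.log_exp]
        exact (hM _ ((Real.log_le_iff_le_exp hx).mpr hxM)).symm)
  have := h ψ
  rw [hψ μ hμ] at this
  exact this.congr fun n => hψ _ (hμs n)

lemma tendsto_integral_logTail (h : WeakTendsto μs μ) (hμ : μ (Iic 0) = 0)
    (hμs : ∀ n, μs n (Iic 0) = 0) (hint : Integrable (fun x => |Real.log x|) μ)
    (hints : ∀ n, Integrable (fun x => |Real.log x|) (μs n))
    (hlog : Tendsto (fun n => ∫ x, |Real.log x| ∂(μs n)) atTop (𝓝 (∫ x, |Real.log x| ∂μ)))
    {M : ℝ} (hM : 0 ≤ M) :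
    Tendsto (fun n => ∫ x, logTail M x ∂(μs n)) atTop (𝓝 (∫ x, logTail M x ∂μ)) := by
  have hmin := h.tendsto_integral_comp_log hμ hμs (φ := fun t => min |t| M)
    (continuous_abs.min continuous_const) (C := M) (M := M)
    (fun t => by rw [abs_of_nonneg (le_min (abs_nonneg t) hM)]; exact min_le_right _ _)
    (fun t ht => by
      rw [min_eq_right (by rw [abs_of_nonpos (by linarith)]; linarith),
        min_eq_right (by rw [abs_neg, abs_of_nonneg hM])])
  simp only [integral_logTail (hints _) hM, integral_logTail hint hM]
  exact hlog.sub hmin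

lemma exists_integral_logTail_lt (h : WeakTendsto μs μ) (hμ : μ (Iic 0) = 0)
    (hμs : ∀ n, μs n (Iic 0) = 0) (hint : Integrable (fun x => |Real.log x|) μ)
    (hints : ∀ n, Integrable (fun x => |Real.log x|) (μs n))
    (hlog : Tendsto (fun n => ∫ x, |Real.log x| ∂(μs n)) atTop (𝓝 (∫ x, |Real.log x| ∂μ)))
    {ε : ℝ} (hε : 0 < ε) :
    ∃ M, 0 ≤ M ∧ ∫ x, logTail M x ∂μ < ε ∧ ∀ᶠ n in atTop, ∫ x, logTail M x ∂(μs n) < ε := by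
  obtain ⟨M, hM, hMε⟩ := ((eventually_ge_atTop 0).and
    ((tendsto_integral_logTail_atTop hint).eventually (gt_mem_nhds hε))).exists
  exact ⟨M, hM, hMε,
    (h.tendsto_integral_logTail hμ hμs hint hints hlog hM).eventually (gt_mem_nhds hMε)⟩

lemma tendsto_integral_log (h : WeakTendsto μs μ) (hμ : μ (Iic 0) = 0)
    (hμs : ∀ n, μs n (Iic 0) = 0) (hint : Integrable (fun x => |Real.log x|) μ)
    (hints : ∀ n, Integrable (fun x => |Real.log x|) (μs n))
    (hlog : Tendsto (fun n => ∫ x, |Real.log x| ∂(μs n)) atTop (𝓝 (∫ x, |Real.log x| ∂μ))) :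
    Tendsto (fun n => ∫ x, Real.log x ∂(μs n)) atTop (𝓝 (∫ x, Real.log x ∂μ)) := by
  rw [Metric.tendsto_atTop]
  intro ε hε
  obtain ⟨M, hM, hμM, hμsM⟩ := h.exists_integral_logTail_lt hμ hμs hint hints hlog
    (by positivity : 0 < ε / 3)
  have hclamp := h.tendsto_integral_comp_log hμ hμs (φ := fun t => max (min t M) (-M))
    ((continuous_id.min continuous_const).max continuous_const) (C := M) (M := M)
    (fun t => abs_le.mpr ⟨le_max_right _ _, max_le (min_le_right _ _) (by linarith)⟩)
    (fun t ht => by simp only [min_eq_left (by linarith : t ≤ M),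
      min_eq_left (by linarith : -M ≤ M), max_eq_right ht, max_self])
  obtain ⟨N, hN⟩ := eventually_atTop.mp
    (hμsM.and (hclamp.eventually (Metric.ball_mem_nhds _ (by positivity : 0 < ε / 3))))
  refine ⟨N, fun n hn => ?_⟩
  obtain ⟨htail, hdist⟩ := hN n hn
  rw [Real.dist_eq] at hdist
  have hn := abs_integral_log_sub_integral_clamp_le (hints n) hM
  have h0 := abs_integral_log_sub_integral_clamp_le hint hM
  rw [abs_sub_comm] at h0
  rw [Real.dist_eq]
  calc _ ≤ |∫ x, Real.log x ∂(μs n) - ∫ x, max (min (Real.log x) M) (-M) ∂(μs n)|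
        + (|∫ x, max (min (Real.log x) M) (-M) ∂(μs n) - ∫ x, max (min (Real.log x) M) (-M) ∂μ|
          + |∫ x, max (min (Real.log x) M) (-M) ∂μ - ∫ x, Real.log x ∂μ|) :=
        (abs_sub_le _ _ _).trans (by gcongr; exact abs_sub_le _ _ _)
    _ < ε := by linarith

lemma tendsto_integral_hsKernelAtOne_sub_log (h : WeakTendsto μs μ) (hμ : μ (Iic 0) = 0)
    (hμs : ∀ n, μs n (Iic 0) = 0) [∀ n, IsProbabilityMeasure (μs n)]
    (hint : Integrable (fun x => |Real.log x|) μ)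
    (hints : ∀ n, Integrable (fun x => |Real.log x|) (μs n))
    (hlog : Tendsto (fun n => ∫ x, |Real.log x| ∂(μs n)) atTop (𝓝 (∫ x, |Real.log x| ∂μ)))
    {cs : ℕ → ℝ} (hcs : ∀ n, cs n ∈ Ioc 0 1) (hcc : Tendsto cs atTop (𝓝 1)) :
    Tendsto (fun n => ∫ x, hsKernelAtOne (cs n) x ∂(μs n) - ∫ x, Real.log x ∂(μs n)) atTop
      (𝓝 0) := by
  refine tendsto_order.mpr ⟨fun a ha => Eventually.of_forall fun n => ha.trans_le ?_,
    fun ε hε => ?_⟩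
  · exact sub_nonneg.mpr (integral_mono_ae (integrable_log_of_integrable_abs_log (hints n))
      (integrable_hsKernelAtOne (hμs n) (hints n) (hcs n).1 (hcs n).2)
      ((ae_pos_of_measure_Iic_zero (hμs n)).mono fun x hx =>
        log_le_hsKernelAtOne (hcs n).1 (hcs n).2 hx))
  obtain ⟨M, hM, -, hμsM⟩ := h.exists_integral_logTail_lt hμ hμs hint hints hlog
    (by positivity : 0 < ε / 4)
  have hcinv : Tendsto (fun n => (cs n)⁻¹) atTop (𝓝 1) := by simpa using hcc.inv₀ one_ne_zero
  have hrest : Tendsto (fun n => ((cs n)⁻¹ - 1) * ∫ x, |Real.log x| ∂(μs n)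
      + (cs n)⁻¹ * (1 - cs n) * Real.exp (2 * M)) atTop (𝓝 0) := by
    simpa using ((hcinv.sub_const 1).mul hlog).add
      ((hcinv.mul ((tendsto_const_nhds (x := (1 : ℝ))).sub hcc)).mul_const (Real.exp (2 * M)))
  filter_upwards [hrest.eventually (gt_mem_nhds (half_pos hε)), hμsM] with n hn htail
  linarith [integral_hsKernelAtOne_sub_log_le (hμs n) (hints n) (hcs n).1 (hcs n).2 hM]

end WeakTendsto

/-- continuity at `c = 1` in the `1`-Wasserstein space over `(0,∞)` with the
logarithmic distance. -/
theorem hsBary_cont_at_one (μ : Measure ℝ) [IsProbabilityMeasure μ]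
    (hsupp : μ (Set.Iic 0) = 0) (hint : Integrable (fun x => |Real.log x|) μ)
    (μs : ℕ → Measure ℝ) (hprob : ∀ n, IsProbabilityMeasure (μs n))
    (hsupps : ∀ n, μs n (Set.Iic 0) = 0)
    (hints : ∀ n, Integrable (fun x => |Real.log x|) (μs n))
    (hweak : ∀ φ : BoundedContinuousFunction ℝ ℝ,
      Filter.Tendsto (fun n => ∫ x, φ x ∂(μs n)) Filter.atTop (nhds (∫ x, φ x ∂μ)))
    (hlog : Filter.Tendsto (fun n => ∫ x, |Real.log x| ∂(μs n)) Filter.atTop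
      (nhds (∫ x, |Real.log x| ∂μ)))
    (cs : ℕ → ℝ) (hcs : ∀ n, cs n ∈ Set.Ioc (0 : ℝ) 1)
    (hcc : Filter.Tendsto cs Filter.atTop (nhds 1)) :
    Filter.Tendsto (fun n => hsBary (cs n) (μs n)) Filter.atTop (nhds (hsBary 1 μ)) ∧
      hsBary 1 μ = ENNReal.ofReal (Real.exp (∫ x, Real.log x ∂μ)) := by
  have hweak' : WeakTendsto μs μ := hweak
  have hone : hsBary 1 μ = ENNReal.ofReal (Real.exp (∫ x, Real.log x ∂μ)) := by
    obtain ⟨t, hlow, hup, hbary⟩ := exists_hsBary_eq_ofReal_exp hsupp hint one_pos le_rfl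
    rw [hsKernelAtOne_one] at hup
    rw [hbary, le_antisymm hup hlow]
  refine ⟨?_, hone⟩
  choose t hlow hup hbary using fun n =>
    exists_hsBary_eq_ofReal_exp (hsupps n) (hints n) (hcs n).1 (hcs n).2
  have hlogs := hweak'.tendsto_integral_log hsupp hsupps hint hints hlog
  have hkernels : Tendsto (fun n => ∫ x, hsKernelAtOne (cs n) x ∂(μs n)) atTop
      (𝓝 (∫ x, Real.log x ∂μ)) := by
    simpa using hlogs.add
      (hweak'.tendsto_integral_hsKernelAtOne_sub_log hsupp hsupps hint hints hlog hcs hcc)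
  have ht := tendsto_of_tendsto_of_tendsto_of_le_of_le hlogs hkernels hlow hup
  rw [hone]
  simp only [hbary]
  exact ((ENNReal.continuous_ofReal.comp Real.continuous_exp).tendsto _).comp ht
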